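/- Let V be a real Hilbert space, a : V × V → ℝ a symmetric, bounded, coercive bilinear form, b : V × Q → ℝ a bounded bilinear form to another Hilbert space Q, and c : Q × Q → ℝ a symmetric, bounded, positive semidefinite bilinear form. Suppose (ψ^i, π^i) ∈ V × Q solve the saddle-point system a(ψ^i, v) + b(v, π^i) = ℓ_i(v) for all v ∈ V and -b(ψ^i, q) + c(π^i, q) = 0 for all q ∈ Q. Then the matrix K_{ij} := ℓ_i(ψ^j) satisfies K_{ij} = a(ψ^j, ψ^i) + c(π^j, π^i); in particular K is symmetric and positive semidefinite. -/
import Mathlib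


open Finset

/-- Abstract saddle-point representation of the homogenized permeability:
if `(ψ^i, π^i)` solve `a(ψ^i,v) + b(v,π^i) = ℓ_i(v)` and `-b(ψ^i,q) + c(π^i,q) = 0`,
with `a` symmetric bounded coercive, `b` bounded and `c` symmetric bounded positive
semidefinite, then `K_{ij} = ℓ_i(ψ^j)` satisfies
`K_{ij} = a(ψ^j,ψ^i) + c(π^j,π^i)`; in particular `K` is symmetric positive
semidefinite. -/
theorem permeability_saddle_representation
    {V Q : Type*} [NormedAddCommGroup V] [InnerProductSpace ℝ V] [CompleteSpace V]
    [NormedAddCommGroup Q] [InnerProductSpace ℝ Q] [CompleteSpace Q]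
    {n : ℕ}
    (a : V →ₗ[ℝ] V →ₗ[ℝ] ℝ)
    (ha_symm : ∀ u v, a u v = a v u)
    (ha_bound : ∃ Ca : ℝ, ∀ u v, |a u v| ≤ Ca * ‖u‖ * ‖v‖)
    (ha_coer : ∃ α : ℝ, 0 < α ∧ ∀ u, α * ‖u‖ ^ 2 ≤ a u u)
    (b : V →ₗ[ℝ] Q →ₗ[ℝ] ℝ)
    (hb_bound : ∃ Cb : ℝ, ∀ v q, |b v q| ≤ Cb * ‖v‖ * ‖q‖)
    (c : Q →ₗ[ℝ] Q →ₗ[ℝ] ℝ)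
    (hc_symm : ∀ p q, c p q = c q p)
    (hc_bound : ∃ Cc : ℝ, ∀ p q, |c p q| ≤ Cc * ‖p‖ * ‖q‖)
    (hc_psd : ∀ q, 0 ≤ c q q)
    (ℓ : Fin n → V →L[ℝ] ℝ) (ψ : Fin n → V) (π : Fin n → Q)
    (hsys1 : ∀ i : Fin n, ∀ v : V, a (ψ i) v + b v (π i) = ℓ i v)
    (hsys2 : ∀ i : Fin n, ∀ q : Q, -(b (ψ i) q) + c (π i) q = 0)
    (K : Matrix (Fin n) (Fin n) ℝ)
    (hK : ∀ i j, K i j = ℓ i (ψ j)) :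
    (∀ i j, K i j = a (ψ j) (ψ i) + c (π j) (π i)) ∧
    (∀ i j, K i j = K j i) ∧
    (∀ x : Fin n → ℝ, 0 ≤ ∑ i : Fin n, ∑ j : Fin n, x i * x j * K i j) := by
  obtain ⟨α, hα, hcoer⟩ := ha_coer
  have hrep : ∀ i j, K i j = a (ψ j) (ψ i) + c (π j) (π i) := by
    intro i j
    have h2 := hsys2 j (π i)
    have hb : b (ψ j) (π i) = c (π j) (π i) := by linarith
    have h1 := hsys1 i (ψ j)
    rw [hK i j, ← h1, ha_symm, hb]
  refine ⟨hrep, fun i j => by rw [hrep i j, hrep j i, ha_symm, hc_symm], ?_⟩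
  intro x
  have ha_sum : ∀ (u : V), a (∑ j, x j • ψ j) u = ∑ j, x j * a (ψ j) u := by
    intro u
    simp [map_sum, map_smul]
  have hc_sum : ∀ (p : Q), c (∑ j, x j • π j) p = ∑ j, x j * c (π j) p := by
    intro p
    simp [map_sum, map_smul]
  have key : ∑ i : Fin n, ∑ j : Fin n, x i * x j * K i j
      = a (∑ j, x j • ψ j) (∑ i, x i • ψ i) + c (∑ j, x j • π j) (∑ i, x i • π i) := by
    rw [ha_sum, hc_sum]
    simp only [map_sum, map_smul, smul_eq_mul, Finset.mul_sum, ← Finset.sum_add_distrib]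
    rw [Finset.sum_comm]
    refine Finset.sum_congr rfl fun i _ => Finset.sum_congr rfl fun j _ => ?_
    rw [hrep j i]; ring
  rw [key]
  have h1 : (0:ℝ) ≤ a (∑ j, x j • ψ j) (∑ i, x i • ψ i) :=
    le_trans (by positivity) (hcoer _)
  exact add_nonneg h1 (hc_psd _)
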